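/- Let A be an n×n Hermitian complex matrix with Tr A < 0. Then the number of negative eigenvalues of A, counted with multiplicity, is at least (Tr A)² / ‖A‖_F², where ‖A‖_F² = Σ_{i,j} |A_{ij}|² is the squared Frobenius (Hilbert–Schmidt) norm. -/

import Mathlib

/-!
With `λ` the eigenvalues, `Tr A = ∑ λᵢ` and `‖A‖_F² = Tr (A²) = ∑ λᵢ²`, so the claim is about
real numbers: when `∑ λᵢ ≤ 0`, dropping the nonnegative terms gives `|∑ λᵢ| ≤ |∑_{λᵢ<0} λᵢ|`,
and Cauchy–Schwarz bounds the square of the latter by `#{λᵢ < 0} · ∑ λᵢ²`.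
-/

open Matrix Finset

theorem sq_sum_div_sum_sq_le_card_neg {ι : Type*} [Fintype ι] (μ : ι → ℝ)
    (hμ : ∑ i, μ i ≤ 0) :
    (∑ i, μ i) ^ 2 / ∑ i, μ i ^ 2 ≤ (#{i | μ i < 0} : ℝ) := by
  set S : Finset ι := {i | μ i < 0}
  have hneg_le : ∑ i ∈ S, μ i ≤ ∑ i, μ i :=
    sum_le_sum_of_subset_of_nonneg (subset_univ S) fun i _ hi => by
      simpa [S] using hi
  have hsq_le : (∑ i, μ i) ^ 2 ≤ (∑ i ∈ S, μ i) ^ 2 := by nlinarith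
  have hsub : ∑ i ∈ S, μ i ^ 2 ≤ ∑ i, μ i ^ 2 :=
    sum_le_sum_of_subset_of_nonneg (subset_univ S) fun i _ _ => sq_nonneg _
  have key : (∑ i, μ i) ^ 2 ≤ #S * ∑ i, μ i ^ 2 := calc
    (∑ i, μ i) ^ 2 ≤ (∑ i ∈ S, μ i) ^ 2 := hsq_le
    _ ≤ #S * ∑ i ∈ S, μ i ^ 2 := sq_sum_le_card_mul_sum_sq
    _ ≤ #S * ∑ i, μ i ^ 2 := by gcongr
  rcases (sum_nonneg fun i _ => sq_nonneg (μ i)).eq_or_lt with h0 | h0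
  · rw [← h0, div_zero]; positivity
  · rwa [div_le_iff₀ h0]

namespace Matrix

variable {𝕜 n : Type*} [RCLike 𝕜] [Fintype n]

theorem re_trace_conjTranspose_mul_self (A : Matrix n n 𝕜) :
    RCLike.re (Aᴴ * A).trace = ∑ i, ∑ j, ‖A i j‖ ^ 2 := by
  rw [sum_comm]
  simp [trace, mul_apply, RCLike.conj_mul]

variable [DecidableEq n] {A : Matrix n n 𝕜}

theorem IsHermitian.trace_mul_self_eq_sum_eigenvalues_sq (hA : A.IsHermitian) :
    (A * A).trace = ∑ i, (hA.eigenvalues i : 𝕜) ^ 2 := by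
  conv_lhs => rw [hA.spectral_theorem, ← map_mul, Unitary.conjStarAlgAut_apply, trace_mul_cycle,
    Unitary.coe_star_mul_self, one_mul, diagonal_mul_diagonal, trace_diagonal]
  simp [sq]

theorem IsHermitian.sum_norm_sq_eq_sum_eigenvalues_sq (hA : A.IsHermitian) :
    ∑ i, ∑ j, ‖A i j‖ ^ 2 = ∑ i, hA.eigenvalues i ^ 2 := by
  rw [← re_trace_conjTranspose_mul_self, hA.eq, hA.trace_mul_self_eq_sum_eigenvalues_sq]
  norm_cast

theorem IsHermitian.re_trace_eq_sum_eigenvalues (hA : A.IsHermitian) :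
    RCLike.re A.trace = ∑ i, hA.eigenvalues i := by
  simp [hA.trace_eq_sum_eigenvalues]

end Matrix

/-- For an `n × n` Hermitian complex matrix `A` with `Tr A < 0`, the number of
negative eigenvalues of `A` (with multiplicity) is at least `(Tr A)² / ‖A‖_F²`. -/
theorem stmt2 {n : ℕ} (A : Matrix (Fin n) (Fin n) ℂ) (hA : A.IsHermitian)
    (htr : (A.trace).re < 0) :
    (A.trace).re ^ 2 / (∑ i, ∑ j, ‖A i j‖ ^ 2) ≤
      ((Finset.univ.filter fun i => hA.eigenvalues i < 0).card : ℝ) := by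
  have htr_eq : A.trace.re = ∑ i, hA.eigenvalues i := hA.re_trace_eq_sum_eigenvalues
  rw [htr_eq, hA.sum_norm_sq_eq_sum_eigenvalues_sq]
  exact sq_sum_div_sum_sq_le_card_neg _ (htr_eq ▸ htr.le)
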